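/- arXiv:1007.1368 — 3 statements merged into one kernel-verified Lean document; each statement's English description precedes it below -/
import Mathlib

section
/- Let (f, γ, β) be a point of the polytope Q_p defined by the PNBLPD constraints. Then setting w_{j,b} = β_{j,b} for all j ∈ J and b ∈ C_j yields a point (f, w) of the polytope Q_f defined by the NBLPD constraints; that is, for every j ∈ J, i ∈ I_j, α ∈ R⁻, one has f_i^{(α)} = ∑_{b ∈ C_j, b_i = α} w_{j,b}, and w_{j,·} is a probability distribution on C_j. -/
/-- The local single parity check code C_j attached to row j of the parity-check matrix H:
    vectors supported on I_j = supp(H_j) satisfying the parity check. -/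
def SPCCode (R : Type*) [Ring R] (n m : ℕ) (H : Fin m → Fin n → R) (j : Fin m) :=
  {b : Fin n → R // (∀ i, H j i = 0 → b i = 0) ∧ (∑ i, b i * H j i) = 0}

instance (R : Type*) [Ring R] [Fintype R] [DecidableEq R] (n m : ℕ)
    (H : Fin m → Fin n → R) (j : Fin m) : Fintype (SPCCode R n m H j) :=
  Subtype.fintype _

theorem Qp_subset_Qf_general (R : Type*) [Ring R] [Fintype R] [DecidableEq R]
    (n m : ℕ) (H : Fin m → Fin n → R)
    (f : Fin n → {ρ : R // ρ ≠ 0} → ℝ)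
    (u : Fin n → Option (Fin m) → {ρ : R // ρ ≠ 0} → ℝ)
    (v : Fin m → Fin n → {ρ : R // ρ ≠ 0} → ℝ)
    (γ : Fin n → R → ℝ)
    (β : ∀ j : Fin m, SPCCode R n m H j → ℝ)
    -- Q_p constraints:
    (hfu : ∀ i, f i = u i none)
    (huv : ∀ j i, H j i ≠ 0 → u i (some j) = v j i)
    (hu0 : ∀ i (α : {ρ : R // ρ ≠ 0}),
      u i none α = ∑ a : R, γ i a * (if (α : R) = a then 1 else 0))
    (huj : ∀ i j, H j i ≠ 0 → ∀ α : {ρ : R // ρ ≠ 0},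
      u i (some j) α = ∑ a : R, γ i a * (if (α : R) = a then 1 else 0))
    (hv : ∀ j i, H j i ≠ 0 → ∀ α : {ρ : R // ρ ≠ 0},
      v j i α = ∑ b : SPCCode R n m H j, β j b * (if b.1 i = (α : R) then 1 else 0))
    (hβpos : ∀ j b, 0 ≤ β j b)
    (hβsum : ∀ j, (∑ b : SPCCode R n m H j, β j b) = 1) :
    -- (f, w) with w = β satisfies the Q_f (NBLPD) constraints:
    ∃ w : ∀ j : Fin m, SPCCode R n m H j → ℝ,
      (∀ j b, w j b = β j b) ∧
      (∀ j i, H j i ≠ 0 → ∀ α : {ρ : R // ρ ≠ 0},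
        f i α = ∑ b : SPCCode R n m H j, (if b.1 i = (α : R) then w j b else 0)) ∧
      (∀ j b, 0 ≤ w j b) ∧
      (∀ j, (∑ b : SPCCode R n m H j, w j b) = 1) := by
  refine ⟨β, fun _ _ => rfl, fun j i hji α => ?_, hβpos, hβsum⟩
  have hf_eq_v : f i α = v j i α := by
    rw [hfu, hu0, ← huj i j hji, huv j i hji]
  rw [hf_eq_v, hv j i hji α]
  simp only [mul_ite, mul_one, mul_zero]

/-- Theorem 1, forward direction: every point (f, γ, β) of the polytope Q_p (PNBLPD) yields,
    via w := β, a point (f, w) of the polytope Q_f (NBLPD). -/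
theorem Qp_subset_Qf (R : Type*) [Ring R] [Fintype R] [DecidableEq R]
    (n m : ℕ) (H : Fin m → Fin n → R)
    (f : Fin n → {ρ : R // ρ ≠ 0} → ℝ)
    (u : Fin n → Option (Fin m) → {ρ : R // ρ ≠ 0} → ℝ)
    (v : Fin m → Fin n → {ρ : R // ρ ≠ 0} → ℝ)
    (γ : Fin n → R → ℝ)
    (β : ∀ j : Fin m, SPCCode R n m H j → ℝ)
    -- Q_p constraints:
    (hfu : ∀ i, f i = u i none)
    (huv : ∀ j i, H j i ≠ 0 → u i (some j) = v j i)
    (hu0 : ∀ i (α : {ρ : R // ρ ≠ 0}),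
      u i none α = ∑ a : R, γ i a * (if (α : R) = a then 1 else 0))
    (huj : ∀ i j, H j i ≠ 0 → ∀ α : {ρ : R // ρ ≠ 0},
      u i (some j) α = ∑ a : R, γ i a * (if (α : R) = a then 1 else 0))
    (hv : ∀ j i, H j i ≠ 0 → ∀ α : {ρ : R // ρ ≠ 0},
      v j i α = ∑ b : SPCCode R n m H j, β j b * (if b.1 i = (α : R) then 1 else 0))
    (hγpos : ∀ i a, 0 ≤ γ i a)
    (hβpos : ∀ j b, 0 ≤ β j b)
    (hγsum : ∀ i, (∑ a : R, γ i a) = 1)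
    (hβsum : ∀ j, (∑ b : SPCCode R n m H j, β j b) = 1) :
    -- (f, w) with w = β satisfies the Q_f (NBLPD) constraints:
    ∃ w : ∀ j : Fin m, SPCCode R n m H j → ℝ,
      (∀ j b, w j b = β j b) ∧
      (∀ j i, H j i ≠ 0 → ∀ α : {ρ : R // ρ ≠ 0},
        f i α = ∑ b : SPCCode R n m H j, (if b.1 i = (α : R) then w j b else 0)) ∧
      (∀ j b, 0 ≤ w j b) ∧
      (∀ j, (∑ b : SPCCode R n m H j, w j b) = 1) :=
  Qp_subset_Qf_general R n m H f u v γ β hfu huv hu0 huj hv hβpos hβsum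
end

section
/- Conversely, for every point (f, w) of the NBLPD polytope Q_f there exist nonnegative weights γ (convex combinations over the repetition codes A_i) and β = w such that (f, γ, β) lies in the PNBLPD polytope Q_p. Hence the projections of Q_f and Q_p onto the f-coordinates coincide. -/
/-!
Pick for every variable node `i` one check `j` containing it. The marginal at coordinate `i` of
the probability weights `w j` on the local code `C_j` is a probability vector `γ i` on `R`, and
the `Q_f` constraints say precisely that its entries at nonzero symbols are `f i`. Taking all edge
variables `u`, `v` equal to `f` and `β = w` then satisfies every constraint of `Q_p`.
-/

section Marginal

variable {ι α : Type*} [Fintype ι] [DecidableEq α]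

def marginal (p : ι → ℝ) (g : ι → α) (a : α) : ℝ :=
  ∑ x, if g x = a then p x else 0

lemma marginal_nonneg {p : ι → ℝ} (hp : ∀ x, 0 ≤ p x) (g : ι → α) (a : α) :
    0 ≤ marginal p g a :=
  Finset.sum_nonneg fun x _ => ite_nonneg (hp x) le_rfl

lemma sum_marginal [Fintype α] (p : ι → ℝ) (g : ι → α) :
    ∑ a, marginal p g a = ∑ x, p x := by
  unfold marginal
  rw [Finset.sum_comm]
  simp

end Marginal

lemma sum_mul_boole_eq_apply {α S : Type*} [Fintype α] [DecidableEq α] [NonAssocSemiring S]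
    (γ : α → S) (x : α) :
    ∑ a, γ a * (if x = a then 1 else 0) = γ x := by
  simp

/-- Theorem 1, converse direction: for every point (f, w) of the polytope Q_f (NBLPD)
    there exist repetition-code weights γ, auxiliary variables u, v, and SPC weights
    β = w such that (f, γ, β) lies in the polytope Q_p (PNBLPD). -/
theorem Qf_subset_Qp (R : Type*) [Ring R] [Fintype R] [DecidableEq R]
    (n m : ℕ) (H : Fin m → Fin n → R)
    (hcol : ∀ i, ∃ j, H j i ≠ 0)
    (f : Fin n → {ρ : R // ρ ≠ 0} → ℝ)
    (w : ∀ j : Fin m, SPCCode R n m H j → ℝ)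
    -- Q_f (NBLPD) constraints:
    (hfw : ∀ j i, H j i ≠ 0 → ∀ α : {ρ : R // ρ ≠ 0},
      f i α = ∑ b : SPCCode R n m H j, (if b.1 i = (α : R) then w j b else 0))
    (hwpos : ∀ j b, 0 ≤ w j b)
    (hwsum : ∀ j, (∑ b : SPCCode R n m H j, w j b) = 1) :
    -- existence of a Q_p point with β = w:
    ∃ (u : Fin n → Option (Fin m) → {ρ : R // ρ ≠ 0} → ℝ)
      (v : Fin m → Fin n → {ρ : R // ρ ≠ 0} → ℝ)
      (γ : Fin n → R → ℝ)
      (β : ∀ j : Fin m, SPCCode R n m H j → ℝ),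
      (∀ j b, β j b = w j b) ∧
      (∀ i, f i = u i none) ∧
      (∀ j i, H j i ≠ 0 → u i (some j) = v j i) ∧
      (∀ i (α : {ρ : R // ρ ≠ 0}),
        u i none α = ∑ a : R, γ i a * (if (α : R) = a then 1 else 0)) ∧
      (∀ i j, H j i ≠ 0 → ∀ α : {ρ : R // ρ ≠ 0},
        u i (some j) α = ∑ a : R, γ i a * (if (α : R) = a then 1 else 0)) ∧
      (∀ j i, H j i ≠ 0 → ∀ α : {ρ : R // ρ ≠ 0},
        v j i α = ∑ b : SPCCode R n m H j, β j b * (if b.1 i = (α : R) then 1 else 0)) ∧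
      (∀ i a, 0 ≤ γ i a) ∧
      (∀ j b, 0 ≤ β j b) ∧
      (∀ i, (∑ a : R, γ i a) = 1) ∧
      (∀ j, (∑ b : SPCCode R n m H j, β j b) = 1) := by
  choose c hc using hcol
  let γ (i : Fin n) : R → ℝ := marginal (w (c i)) (fun b => b.1 i)
  have hfγ (i : Fin n) (α : {ρ : R // ρ ≠ 0}) :
      f i α = ∑ a : R, γ i a * (if (α : R) = a then 1 else 0) := by
    rw [sum_mul_boole_eq_apply]
    exact hfw (c i) i (hc i) α
  refine ⟨fun i _ => f i, fun _ i => f i, γ, w, fun _ _ => rfl, fun _ => rfl,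
    fun _ _ _ => rfl, hfγ, fun i _ _ => hfγ i, ?_, fun i => marginal_nonneg (hwpos _) _,
    hwpos, fun i => (sum_marginal _ _).trans (hwsum _), hwsum⟩
  intro j i hj α
  simpa only [mul_boole] using hfw j i hj α
end

section
/- The function h(x) = -ψ^{-1}(ψ(V̄) + ψ(x)ψ(V)) - ψ^{-1}(ψ(C̄) + ψ(-x)ψ(C)), where ψ(t) = e^{κt} and ψ^{-1}(t) = (1/κ) log t with κ > 0, attains its unique global maximum over x ∈ ℝ at x* = ((V̄ - V) - (C̄ - C))/2. -/
/-!
Both logarithms together equal `-(1/κ) log P(x)`, where the product `P` of their arguments is a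
positive constant plus a positive multiple of `cosh (κ (x - x*))`. Since `cosh` has its strict
minimum at `0` and `-(1/κ) log` is strictly decreasing, `h` has its strict maximum at `x*`.
-/

open Real

theorem exp_sum_mul_exp_sum_eq_add_mul_cosh (κ a b c d x : ℝ) :
    (exp (κ * a) + exp (κ * x) * exp (κ * b)) * (exp (κ * c) + exp (κ * (-x)) * exp (κ * d)) =
      exp (κ * (a + c)) + exp (κ * (b + d)) +
        2 * exp (κ * (a + b + c + d) / 2) * cosh (κ * (x - ((a - b) - (c - d)) / 2)) := by
  rw [cosh_eq]
  simp only [← exp_add, mul_add, add_mul]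
  ring_nf
  simp only [← exp_add]
  ring_nf

theorem neg_div_mul_log_add_mul_cosh_lt {κ A B x₀ x : ℝ} (hκ : 0 < κ) (hA : 0 ≤ A) (hB : 0 < B)
    (hx : x ≠ x₀) :
    -(1 / κ) * log (A + B * cosh (κ * (x - x₀))) <
      -(1 / κ) * log (A + B * cosh (κ * (x₀ - x₀))) := by
  have hcosh : 1 < cosh (κ * (x - x₀)) := one_lt_cosh.2 (mul_ne_zero hκ.ne' (sub_ne_zero.2 hx))
  rw [sub_self, mul_zero, cosh_zero, mul_one]
  refine mul_lt_mul_of_neg_left (log_lt_log (by positivity) ?_) (by simp [hκ])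
  nlinarith

theorem forall_le_and_eq_imp_of_forall_ne_lt {α β : Type*} [Preorder β] {f : α → β} {x₀ : α}
    (h : ∀ x ≠ x₀, f x < f x₀) : (∀ x, f x ≤ f x₀) ∧ (∀ x, f x = f x₀ → x = x₀) := by
  refine ⟨fun x => ?_, fun x hx => ?_⟩
  · rcases eq_or_ne x x₀ with rfl | hne
    · exact le_rfl
    · exact (h x hne).le
  · by_contra hne
    exact (h x hne).ne hx

/-- The softened local function h attains its unique global maximum at
    x* = ((V̄ - V) - (C̄ - C))/2. -/
theorem local_function_unique_max (κ Vb V Cb C : ℝ) (hκ : 0 < κ) :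
    let h : ℝ → ℝ := fun x =>
      -((1/κ) * Real.log (Real.exp (κ * Vb) + Real.exp (κ * x) * Real.exp (κ * V)))
      - (1/κ) * Real.log (Real.exp (κ * Cb) + Real.exp (κ * (-x)) * Real.exp (κ * C))
    let xstar : ℝ := ((Vb - V) - (Cb - C)) / 2
    (∀ x : ℝ, h x ≤ h xstar) ∧ (∀ x : ℝ, h x = h xstar → x = xstar) := by
  intro h xstar
  have h_eq : ∀ x, h x = -(1 / κ) * log (exp (κ * (Vb + Cb)) + exp (κ * (V + C)) +
      2 * exp (κ * (Vb + V + Cb + C) / 2) * cosh (κ * (x - xstar))) := fun x => by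
    rw [← exp_sum_mul_exp_sum_eq_add_mul_cosh, log_mul (by positivity) (by positivity)]
    ring
  refine forall_le_and_eq_imp_of_forall_ne_lt fun x hx => ?_
  rw [h_eq, h_eq]
  exact neg_div_mul_log_add_mul_cosh_lt hκ (by positivity) (by positivity) hx
end
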